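/- Let m₀ = 2k ≥ 4 be even, θᵢ ∈ {±1} with θ_l ≠ θ_{m(l)}, and p_{m₀}(u) = (Σᵢθᵢuᵢ²)^k. Then the polynomial Σ_{|β|=m₀−2} [(θ^β u^{β+e_{m(l)}}/β!)(∂_{β+e_l}p_{m₀})(u) − (θ^β u^{β+e_l}/β!)(∂_{β+e_{m(l)}}p_{m₀})(u)] is not identically zero; in fact the monomial u^{m₀e_l − e_l + e_{m(l)}} appears in it with coefficient θ_l^k·[m₀ − θ_lθ_{m(l)}m₀] = 2m₀θ_l^k ≠ 0. -/

import Mathlib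

open MvPolynomial

/-- Multi-index partial derivative `∂_α p` of a multivariate polynomial. -/
noncomputable def mderiv {n : ℕ} (α : Fin n → ℕ) (p : MvPolynomial (Fin n) ℝ) :
    MvPolynomial (Fin n) ℝ :=
  (List.finRange n).foldr (fun i q => (fun r => MvPolynomial.pderiv i r)^[α i] q) p

/-- `α! = ∏ᵢ (αᵢ)!` for a multi-index. -/
def mfact {n : ℕ} (α : Fin n → ℕ) : ℕ := ∏ i, (α i).factorial

/-- `|α| = Σᵢ αᵢ` for a multi-index. -/
def mdeg {n : ℕ} (α : Fin n → ℕ) : ℕ := ∑ i, α i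

/-- The monomial `w^α = ∏ᵢ wᵢ^{αᵢ}` as a polynomial. -/
noncomputable def monX {n : ℕ} (α : Fin n → ℕ) : MvPolynomial (Fin n) ℝ :=
  ∏ i, (X i : MvPolynomial (Fin n) ℝ) ^ α i

/-- The polynomial `B_{j,γ}` attached to `p` and a distinguished coordinate `l`:
`B_{j,γ}(w) = Σ_{α≤γ} (-1)^{|α|}/(α!(γ−α)!) (∂_{(α;|γ−α|)}p)(w)·w^{(γ−α;|α|)}`,
where multi-indices `γ, α` satisfy `γ l = 0` and `(β;k)` inserts `k` in the
`l`-th coordinate (realized here by `Function.update`). -/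
noncomputable def Bpoly {n : ℕ} (l : Fin n) (γ : Fin n → ℕ)
    (p : MvPolynomial (Fin n) ℝ) : MvPolynomial (Fin n) ℝ :=
  ∑ α ∈ Finset.Iic γ,
    (C ((-1 : ℝ) ^ (mdeg α) / ((mfact α : ℝ) * (mfact (γ - α) : ℝ))) :
        MvPolynomial (Fin n) ℝ) *
      mderiv (Function.update α l (mdeg (γ - α))) p *
      monX (Function.update (γ - α) l (mdeg α))


/-!
Extract the coefficient of `T = (2k-1) e_l + e_m` term by term. A product `u^γ · ∂^δ p`
contributes to it only if `γ ≤ T`, and then with `(T-γ+δ)!/(T-γ)!` times the coefficient of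
`p` at `T-γ+δ`. Since `|β| = |T| - 2`, the condition `β + e_m ≤ T` leaves only
`β = (2k-2) e_l`, and `β + e_l ≤ T` leaves `β ∈ {(2k-2) e_l, (2k-3) e_l + e_m}`. By the
multinomial theorem the coefficients of `p` needed are `θ_l^k` at `2k e_l` and
`k θ_l^(k-1) θ_m` at `(2k-2) e_l + 2 e_m`, and `θ_i² = 1` collapses the three contributions to
`θ_l^k (2k - θ_l θ_m 2k)`, which is `4k θ_l^k ≠ 0` when `θ_l ≠ θ_m`.
-/

open scoped Nat
open Finsupp (equivFunOnFinite)

theorem equivFunOnFinite_symm_add {α M : Type*} [Finite α] [AddZeroClass M] (f g : α → M) :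
    equivFunOnFinite.symm (f + g) = equivFunOnFinite.symm f + equivFunOnFinite.symm g := by
  ext; simp

theorem add_ite_eq_add_single {ι : Type*} [DecidableEq ι] (β : ι → ℕ) (j : ι) :
    (fun i => β i + if i = j then 1 else 0) = β + Pi.single j 1 := by
  ext i
  simp [Pi.single_apply]

section IteratedPDeriv

variable {σ R : Type*} [CommSemiring R]

theorem coeff_iterate_pderiv_mul_factorial (i : σ) (j : ℕ) (q : MvPolynomial σ R)
    (τ : σ →₀ ℕ) :
    coeff τ ((pderiv i)^[j] q) * (τ i)! = coeff (τ + Finsupp.single i j) q * (τ i + j)! := by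
  induction j generalizing τ with
  | zero => simp
  | succ j ih =>
    have := ih (τ + Finsupp.single i 1)
    simp only [Finsupp.add_apply, Finsupp.single_eq_same, add_assoc, ← Finsupp.single_add,
      add_comm 1 j] at this
    rw [Function.iterate_succ_apply', coeff_pderiv, mul_assoc, ← this]
    push_cast [Nat.factorial_succ]
    ring

theorem coeff_foldr_iterate_pderiv_mul (α : σ → ℕ) (p : MvPolynomial σ R) {L : List σ}
    (hL : L.Nodup) (τ : σ →₀ ℕ) :
    coeff τ (L.foldr (fun i q => (pderiv i)^[α i] q) p) * (L.map fun i => ((τ i)! : R)).prod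
      = coeff (τ + (L.map fun i => Finsupp.single i (α i)).sum) p
          * (L.map fun i => ((τ i + α i)! : R)).prod := by
  induction L generalizing τ with
  | nil => simp
  | cons i L ih =>
    obtain ⟨hiL, hL⟩ := List.nodup_cons.mp hL
    have hshift : ∀ j ∈ L, (τ + Finsupp.single i (α i)) j = τ j := fun j hj => by
      simp [Finsupp.single_eq_of_ne (ne_of_mem_of_not_mem hj hiL)]
    have h₁ : L.map (fun j => (((τ + Finsupp.single i (α i)) j)! : R))
        = L.map fun j => ((τ j)! : R) := List.map_congr_left fun j hj => by rw [hshift j hj]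
    have h₂ : L.map (fun j => (((τ + Finsupp.single i (α i)) j + α j)! : R))
        = L.map fun j => ((τ j + α j)! : R) := List.map_congr_left fun j hj => by rw [hshift j hj]
    have := ih hL (τ + Finsupp.single i (α i))
    rw [h₁, h₂, add_assoc] at this
    simp only [List.foldr_cons, List.map_cons, List.prod_cons, List.sum_cons]
    calc _ = coeff τ ((pderiv i)^[α i] (L.foldr (fun i q => (pderiv i)^[α i] q) p)) * (τ i)!
          * (L.map fun j => ((τ j)! : R)).prod := by ring
      _ = _ := by rw [coeff_iterate_pderiv_mul_factorial, mul_right_comm, this]; ring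

end IteratedPDeriv

section SumOfSquares

variable {σ R : Type*} [CommSemiring R] [Fintype σ] [DecidableEq σ]

theorem prod_C_mul_X_sq_pow (θ : σ → R) (κ : σ → ℕ) :
    ∏ i, (C (θ i) * X i ^ 2) ^ κ i
      = C (∏ i, θ i ^ κ i) * monomial (equivFunOnFinite.symm (2 • κ)) (1 : R) := by
  simp_rw [mul_pow, Finset.prod_mul_distrib, ← map_pow, ← map_prod, ← pow_mul, prod_X_pow]
  congr
  ext
  simp [mul_comm]

theorem coeff_sum_C_mul_X_sq_pow (θ : σ → R) (ω : σ → ℕ) :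
    coeff (equivFunOnFinite.symm (2 • ω)) ((∑ i, C (θ i) * X i ^ 2) ^ ∑ i, ω i)
      = Nat.multinomial Finset.univ ω * ∏ i, θ i ^ ω i := by
  rw [Finset.sum_pow_eq_sum_piAntidiag, coeff_sum, Finset.sum_eq_single ω]
  · rw [prod_C_mul_X_sq_pow, ← map_natCast C, ← mul_assoc, ← map_mul, coeff_C_mul,
      coeff_monomial, if_pos rfl, mul_one]
  · intro κ _ hκ
    rw [prod_C_mul_X_sq_pow, ← map_natCast C, ← mul_assoc, ← map_mul, coeff_C_mul,
      coeff_monomial, if_neg, mul_zero]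
    intro h
    refine hκ (funext fun i => ?_)
    have := congrArg (· i) h
    simp only [Finsupp.coe_equivFunOnFinite_symm, Pi.smul_apply, smul_eq_mul] at this
    omega
  · simp

end SumOfSquares

section PairIndex

variable {ι : Type*} [DecidableEq ι] {l m : ι}

def pairIndex (l m : ι) (a b : ℕ) : ι → ℕ := Pi.single l a + Pi.single m b

theorem pairIndex_apply (l m : ι) (a b : ℕ) (i : ι) :
    pairIndex l m a b i = (if i = l then a else 0) + if i = m then b else 0 := by
  simp [pairIndex, Pi.single_apply]

theorem pairIndex_add (a b c d : ℕ) :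
    pairIndex l m a b + pairIndex l m c d = pairIndex l m (a + c) (b + d) := by
  simp only [pairIndex, Pi.single_add]
  abel

theorem nsmul_pairIndex (c a b : ℕ) : c • pairIndex l m a b = pairIndex l m (c * a) (c * b) := by
  ext i
  simp only [Pi.smul_apply, smul_eq_mul, pairIndex_apply]
  split_ifs <;> ring

theorem pairIndex_zero_one (l m : ι) : pairIndex l m 0 1 = Pi.single m 1 := by
  simp [pairIndex]

theorem pairIndex_one_zero (l m : ι) : pairIndex l m 1 0 = Pi.single l 1 := by
  simp [pairIndex]

theorem sum_pairIndex [Fintype ι] (a b : ℕ) : ∑ i, pairIndex l m a b i = a + b := by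
  simp [pairIndex, Finset.sum_add_distrib]

variable (hlm : l ≠ m)
include hlm

theorem pairIndex_le_pairIndex_iff {a b c d : ℕ} :
    pairIndex l m a b ≤ pairIndex l m c d ↔ a ≤ c ∧ b ≤ d := by
  refine ⟨fun h => ⟨?_, ?_⟩, fun ⟨hac, hbd⟩ i => ?_⟩
  · simpa [pairIndex_apply, hlm] using h l
  · simpa [pairIndex_apply, hlm.symm] using h m
  · simp only [pairIndex_apply]
    split_ifs <;> omega

theorem pairIndex_tsub (a b c d : ℕ) :
    pairIndex l m a b - pairIndex l m c d = pairIndex l m (a - c) (b - d) := by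
  ext i
  simp only [Pi.sub_apply, pairIndex_apply]
  split_ifs <;> simp_all

theorem eq_pairIndex_of_le {β : ι → ℕ} {a b : ℕ} (h : β ≤ pairIndex l m a b) :
    β = pairIndex l m (β l) (β m) := by
  ext i
  have := h i
  simp only [pairIndex_apply] at this ⊢
  split_ifs at this ⊢ <;> simp_all

theorem prod_pairIndex [Fintype ι] {M : Type*} [CommMonoid M] (f : ι → ℕ → M)
    (hf : ∀ i, f i 0 = 1) (a b : ℕ) :
    ∏ i, f i (pairIndex l m a b i) = f l a * f m b := by
  rw [Fintype.prod_eq_mul l m hlm fun i hi => by simp [pairIndex_apply, hi.1, hi.2, hf]]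
  simp [pairIndex_apply, hlm, hlm.symm]

theorem prod_pow_pairIndex [Fintype ι] {M : Type*} [CommMonoid M] (x : ι → M) (a b : ℕ) :
    ∏ i, x i ^ pairIndex l m a b i = x l ^ a * x m ^ b :=
  prod_pairIndex hlm (fun i k => x i ^ k) (fun _ => pow_zero _) a b

theorem multinomial_pairIndex [Fintype ι] (a b : ℕ) :
    Nat.multinomial Finset.univ (pairIndex l m a b) = (a + b).choose a := by
  rw [← Nat.multinomial_congr_of_sdiff (Finset.subset_univ {l, m}) (fun i hi => ?_)
    fun _ _ => rfl, Nat.binomial_eq_choose hlm]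
  · simp [pairIndex_apply, hlm, hlm.symm]
  · simp only [Finset.mem_sdiff, Finset.mem_insert, Finset.mem_singleton, not_or] at hi
    simp [pairIndex_apply, hi.2.1, hi.2.2]

end PairIndex

section MultiIndex

variable {n : ℕ}

theorem mfact_pairIndex {l m : Fin n} (hlm : l ≠ m) (a b : ℕ) :
    mfact (pairIndex l m a b) = a ! * b ! :=
  prod_pairIndex hlm (fun _ k => k !) (fun _ => rfl) a b

theorem mfact_ne_zero (α : Fin n → ℕ) : mfact α ≠ 0 :=
  Finset.prod_ne_zero_iff.mpr fun i _ => Nat.factorial_ne_zero (α i)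

theorem coeff_mderiv (α τ : Fin n → ℕ) (p : MvPolynomial (Fin n) ℝ) :
    coeff (equivFunOnFinite.symm τ) (mderiv α p)
      = mfact (τ + α) / mfact τ * coeff (equivFunOnFinite.symm (τ + α)) p := by
  have := coeff_foldr_iterate_pderiv_mul α p (List.nodup_finRange n) (equivFunOnFinite.symm τ)
  rw [← Fin.sum_univ_def, ← Fin.prod_univ_def, ← Fin.prod_univ_def,
    ← Finsupp.equivFunOnFinite_symm_eq_sum, ← equivFunOnFinite_symm_add] at this
  rw [div_mul_eq_mul_div, eq_div_iff (Nat.cast_ne_zero.mpr (mfact_ne_zero τ)), mfact, mfact,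
    mderiv]
  push_cast
  simpa [mul_comm] using this

theorem monX_eq_monomial (α : Fin n → ℕ) :
    monX α = monomial (equivFunOnFinite.symm α) 1 := by
  rw [monX, prod_X_pow]
  congr
  ext
  simp

theorem coeff_monX_mul_of_le {γ τ : Fin n → ℕ} (h : γ ≤ τ) (q : MvPolynomial (Fin n) ℝ) :
    coeff (equivFunOnFinite.symm τ) (monX γ * q) = coeff (equivFunOnFinite.symm (τ - γ)) q := by
  rw [monX_eq_monomial, coeff_monomial_mul',
    if_pos (show equivFunOnFinite.symm γ ≤ equivFunOnFinite.symm τ from h), one_mul]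
  congr 1
  ext
  simp

theorem coeff_monX_mul_of_not_le {γ τ : Fin n → ℕ} (h : ¬γ ≤ τ) (q : MvPolynomial (Fin n) ℝ) :
    coeff (equivFunOnFinite.symm τ) (monX γ * q) = 0 := by
  rw [monX_eq_monomial, coeff_monomial_mul',
    if_neg (show ¬equivFunOnFinite.symm γ ≤ equivFunOnFinite.symm τ from h)]

theorem coeff_monX_mul_mderiv_of_le {γ τ : Fin n → ℕ} (h : γ ≤ τ) (δ : Fin n → ℕ)
    (p : MvPolynomial (Fin n) ℝ) :
    coeff (equivFunOnFinite.symm τ) (monX γ * mderiv δ p)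
      = mfact (τ - γ + δ) / mfact (τ - γ) * coeff (equivFunOnFinite.symm (τ - γ + δ)) p := by
  rw [coeff_monX_mul_of_le h, coeff_mderiv]

theorem coeff_monX_pairIndex_mul_mderiv {l m : Fin n} (hlm : l ≠ m) {a b A B : ℕ} (ha : a ≤ A)
    (hb : b ≤ B) (c d : ℕ) (p : MvPolynomial (Fin n) ℝ) :
    coeff (equivFunOnFinite.symm (pairIndex l m A B))
        (monX (pairIndex l m a b) * mderiv (pairIndex l m c d) p)
      = ((A - a + c)! * (B - b + d)! : ℕ) / ((A - a)! * (B - b)! : ℕ)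
          * coeff (equivFunOnFinite.symm (pairIndex l m (A - a + c) (B - b + d))) p := by
  rw [coeff_monX_mul_mderiv_of_le ((pairIndex_le_pairIndex_iff hlm).2 ⟨ha, hb⟩),
    pairIndex_tsub hlm, pairIndex_add, mfact_pairIndex hlm, mfact_pairIndex hlm]

theorem coeff_sum_C_mul_X_sq_pow_pairIndex {l m : Fin n} (hlm : l ≠ m) (θ : Fin n → ℝ)
    (a b : ℕ) :
    coeff (equivFunOnFinite.symm (pairIndex l m (2 * a) (2 * b)))
        ((∑ i, C (θ i) * X i ^ 2) ^ (a + b))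
      = (a + b).choose a * (θ l ^ a * θ m ^ b) := by
  have := coeff_sum_C_mul_X_sq_pow θ (pairIndex l m a b)
  rwa [nsmul_pairIndex, sum_pairIndex, multinomial_pairIndex hlm, prod_pow_pairIndex hlm] at this

theorem sum_mul_coeff_monX_mul_mderiv_eq_single {l m : Fin n} (hlm : l ≠ m) (N : ℕ)
    (c : (Fin n → ℕ) → ℝ) (p : MvPolynomial (Fin n) ℝ) :
    ∑ β ∈ Finset.Nat.antidiagonalTuple n N, c β *
        coeff (equivFunOnFinite.symm (pairIndex l m (N + 1) 1))
          (monX (β + Pi.single m 1) * mderiv (β + Pi.single l 1) p)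
      = c (pairIndex l m N 0) * (N + 2)!
          * coeff (equivFunOnFinite.symm (pairIndex l m (N + 2) 0)) p := by
  rw [← pairIndex_zero_one l m, ← pairIndex_one_zero l m,
    Finset.sum_eq_single (pairIndex l m N 0)]
  · simp only [pairIndex_add]
    rw [coeff_monX_pairIndex_mul_mderiv hlm (by omega) le_rfl,
      show N + 1 - (N + 0) + (N + 1) = N + 2 by omega]
    norm_num [mul_assoc]
  · intro β hmem hne
    refine mul_eq_zero_of_right _ (coeff_monX_mul_of_not_le (fun hle => hne ?_) _)
    have hβ := eq_pairIndex_of_le hlm (le_trans le_self_add hle)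
    have hsum := Finset.Nat.mem_antidiagonalTuple.mp hmem
    rw [hβ, pairIndex_add, pairIndex_le_pairIndex_iff hlm] at hle
    rw [hβ, sum_pairIndex] at hsum
    rw [hβ]
    congr 1 <;> omega
  · exact fun h => absurd (Finset.Nat.mem_antidiagonalTuple.mpr (sum_pairIndex _ _)) h

theorem sum_mul_coeff_monX_mul_mderiv_eq_add {l m : Fin n} (hlm : l ≠ m) (N : ℕ)
    (c : (Fin n → ℕ) → ℝ) (p : MvPolynomial (Fin n) ℝ) :
    ∑ β ∈ Finset.Nat.antidiagonalTuple n (N + 1), c β *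
        coeff (equivFunOnFinite.symm (pairIndex l m (N + 2) 1))
          (monX (β + Pi.single l 1) * mderiv (β + Pi.single m 1) p)
      = (c (pairIndex l m (N + 1) 0) + c (pairIndex l m N 1)) * ((N + 1)! * 2)
          * coeff (equivFunOnFinite.symm (pairIndex l m (N + 1) 2)) p := by
  have hmem : ∀ a b, a + b = N + 1 →
      pairIndex l m a b ∈ Finset.Nat.antidiagonalTuple n (N + 1) :=
    fun a b h => Finset.Nat.mem_antidiagonalTuple.mpr (by rw [sum_pairIndex, h])
  have hne : pairIndex l m (N + 1) 0 ≠ pairIndex l m N 1 := fun h => by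
    simpa [pairIndex_apply, hlm.symm] using congrFun h m
  rw [← pairIndex_zero_one l m, ← pairIndex_one_zero l m,
    Finset.sum_eq_add_of_mem (pairIndex l m (N + 1) 0) (pairIndex l m N 1) (hmem _ _ rfl)
      (hmem _ _ (by omega)) hne]
  · simp only [pairIndex_add]
    rw [coeff_monX_pairIndex_mul_mderiv hlm, coeff_monX_pairIndex_mul_mderiv hlm]
    · rw [show N + 2 - (N + 1 + 1) + (N + 1 + 0) = N + 1 by omega,
        show N + 2 - (N + 1) + (N + 0) = N + 1 by omega, show N + 2 - (N + 1) = 1 by omega]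
      norm_num
      ring
    all_goals omega
  · rintro β hβmem ⟨hne₁, hne₂⟩
    refine mul_eq_zero_of_right _ (coeff_monX_mul_of_not_le (fun hle => ?_) _)
    have hβ := eq_pairIndex_of_le hlm (le_trans le_self_add hle)
    have hsum := Finset.Nat.mem_antidiagonalTuple.mp hβmem
    rw [hβ, pairIndex_add, pairIndex_le_pairIndex_iff hlm] at hle
    rw [hβ, sum_pairIndex] at hsum
    rw [hβ] at hne₁ hne₂
    obtain h | h : β m = 0 ∨ β m = 1 := by omega
    · exact hne₁ (by rw [h, show β l = N + 1 by omega])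
    · exact hne₂ (by rw [h, show β l = N by omega])

theorem coeff_sum_mul_monX_mul_mderiv_sub {l m : Fin n} (hlm : l ≠ m) {θ : Fin n → ℝ}
    (hl : θ l ^ 2 = 1) (hm : θ m ^ 2 = 1) {k : ℕ} (hk : 2 ≤ k) {p : MvPolynomial (Fin n) ℝ}
    (hp : p = (∑ i, C (θ i) * X i ^ 2) ^ k) :
    coeff (equivFunOnFinite.symm (pairIndex l m (2 * k - 1) 1))
        (∑ β ∈ Finset.Nat.antidiagonalTuple n (2 * k - 2),
          C ((∏ i, θ i ^ β i) / (mfact β : ℝ)) *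
            (monX (β + Pi.single m 1) * mderiv (β + Pi.single l 1) p
              - monX (β + Pi.single l 1) * mderiv (β + Pi.single m 1) p))
      = θ l ^ k * ((2 * k : ℕ) - θ l * θ m * (2 * k : ℕ)) := by
  obtain ⟨j, rfl⟩ : ∃ j, k = j + 2 := ⟨k - 2, by omega⟩
  set c : (Fin n → ℕ) → ℝ := fun β => (∏ i, θ i ^ β i) / (mfact β : ℝ)
  have h₁ := sum_mul_coeff_monX_mul_mderiv_eq_single hlm (2 * j + 2) c p
  have h₂ := sum_mul_coeff_monX_mul_mderiv_eq_add hlm (2 * j + 1) c p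
  have hp₁ := coeff_sum_C_mul_X_sq_pow_pairIndex hlm θ (j + 2) 0
  have hp₂ := coeff_sum_C_mul_X_sq_pow_pairIndex hlm θ (j + 1) 1
  rw [show 2 * (j + 2) - 2 = 2 * j + 2 by omega, show 2 * (j + 2) - 1 = 2 * j + 3 by omega]
  rw [show 2 * j + 2 + 1 = 2 * j + 3 by ring, show 2 * j + 2 + 2 = 2 * j + 4 by ring] at h₁
  rw [show 2 * j + 1 + 1 = 2 * j + 2 by ring, show 2 * j + 1 + 2 = 2 * j + 3 by ring] at h₂
  rw [← hp, mul_zero, add_zero, show 2 * (j + 2) = 2 * j + 4 by ring] at hp₁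
  rw [show j + 1 + 1 = j + 2 by ring, ← hp, mul_one, show 2 * (j + 1) = 2 * j + 2 by ring]
    at hp₂
  simp only [coeff_sum, coeff_C_mul, coeff_sub, mul_sub, Finset.sum_sub_distrib]
  rw [h₁, h₂]
  simp only [c, prod_pow_pairIndex hlm, mfact_pairIndex hlm, hp₁, hp₂]
  have hl₁ : θ l ^ (2 * j + 2) = 1 := by
    rw [show 2 * j + 2 = 2 * (j + 1) by ring, pow_mul, hl, one_pow]
  have hl₂ : θ l ^ (2 * j + 1) = θ l := by rw [pow_succ, pow_mul, hl, one_pow, one_mul]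
  rw [hl₁, hl₂, Nat.choose_self, Nat.choose_succ_self_right, pow_succ _ (j + 1)]
  generalize θ l ^ (j + 1) = t
  push_cast [Nat.factorial_succ]
  field_simp
  linear_combination (-t * θ l * (4 * j ^ 2 + 12 * j + 8)) * hm + (t * θ m * (2 * j + 4)) * hl

end MultiIndex

theorem stmt_18_general {n : ℕ} (θ : Fin n → ℝ) (hθ : ∀ i, θ i = 1 ∨ θ i = -1)
    (l m : Fin n) (hlm : m ≠ l) (hθlm : θ l ≠ θ m) (k : ℕ) (hk : 2 ≤ k)
    (p R : MvPolynomial (Fin n) ℝ)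
    (hp : p = (∑ i, C (θ i) * (X i : MvPolynomial (Fin n) ℝ) ^ 2) ^ k)
    (hR : R = ∑ β ∈ Finset.Nat.antidiagonalTuple n (2 * k - 2),
      (C ((∏ i, θ i ^ β i) / (mfact β : ℝ)) : MvPolynomial (Fin n) ℝ) *
        (monX (fun i => β i + if i = m then 1 else 0) *
            mderiv (fun i => β i + if i = l then 1 else 0) p
         - monX (fun i => β i + if i = l then 1 else 0) *
            mderiv (fun i => β i + if i = m then 1 else 0) p)) :
    MvPolynomial.coeff (Finsupp.single l (2 * k - 1) + Finsupp.single m 1) R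
        = θ l ^ k * ((2 * k : ℕ) - θ l * θ m * (2 * k : ℕ))
    ∧ R ≠ 0 := by
  have hsq : ∀ i, θ i ^ 2 = 1 := fun i => by rcases hθ i with h | h <;> simp [h]
  have hT : Finsupp.single l (2 * k - 1) + Finsupp.single m 1
      = equivFunOnFinite.symm (pairIndex l m (2 * k - 1) 1) := by
    ext i
    rw [Finsupp.coe_equivFunOnFinite_symm, pairIndex_apply, Finsupp.add_apply,
      Finsupp.single_apply, Finsupp.single_apply]
    simp only [eq_comm (a := l), eq_comm (a := m)]
  have hcoeff : coeff (Finsupp.single l (2 * k - 1) + Finsupp.single m 1) R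
      = θ l ^ k * ((2 * k : ℕ) - θ l * θ m * (2 * k : ℕ)) := by
    rw [hR, hT]
    simp only [add_ite_eq_add_single]
    exact coeff_sum_mul_monX_mul_mderiv_sub hlm.symm (hsq l) (hsq m) hk hp
  refine ⟨hcoeff, fun hR0 => ?_⟩
  have hprod : θ l * θ m = -1 := by
    rcases hθ l with h | h <;> rcases hθ m with h' | h' <;>
      first | exact absurd (h.trans h'.symm) hθlm | norm_num [h, h']
  have hl0 : θ l ≠ 0 := fun h => by simpa [h] using hsq l
  rw [hR0, coeff_zero, hprod] at hcoeff
  refine mul_ne_zero (pow_ne_zero _ hl0) ?_ hcoeff.symm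
  have : (2 : ℝ) ≤ k := by exact_mod_cast hk
  push_cast
  linarith

/-- For `m₀ = 2k ≥ 4`, `θᵢ ∈ {±1}` with `θ_l ≠ θ_m`, and
`p_{m₀}(u) = (Σᵢθᵢuᵢ²)^k`, the polynomial
`R = Σ_{|β|=m₀−2}[(θ^β u^{β+e_m}/β!)(∂_{β+e_l}p_{m₀})(u) −
(θ^β u^{β+e_l}/β!)(∂_{β+e_m}p_{m₀})(u)]`
is not identically zero; in fact the monomial `u^{m₀e_l−e_l+e_m}` appears in
`R` with coefficient `θ_l^k·[m₀ − θ_lθ_m·m₀] = 2m₀θ_l^k ≠ 0`. -/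
theorem stmt_18 {n : ℕ} (hn : 2 ≤ n) (θ : Fin n → ℝ) (hθ : ∀ i, θ i = 1 ∨ θ i = -1)
    (l m : Fin n) (hlm : m ≠ l) (hθlm : θ l ≠ θ m) (k : ℕ) (hk : 2 ≤ k)
    (p R : MvPolynomial (Fin n) ℝ)
    (hp : p = (∑ i, C (θ i) * (X i : MvPolynomial (Fin n) ℝ) ^ 2) ^ k)
    (hR : R = ∑ β ∈ Finset.Nat.antidiagonalTuple n (2 * k - 2),
      (C ((∏ i, θ i ^ β i) / (mfact β : ℝ)) : MvPolynomial (Fin n) ℝ) *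
        (monX (fun i => β i + if i = m then 1 else 0) *
            mderiv (fun i => β i + if i = l then 1 else 0) p
         - monX (fun i => β i + if i = l then 1 else 0) *
            mderiv (fun i => β i + if i = m then 1 else 0) p)) :
    MvPolynomial.coeff (Finsupp.single l (2 * k - 1) + Finsupp.single m 1) R
        = θ l ^ k * ((2 * k : ℕ) - θ l * θ m * (2 * k : ℕ))
    ∧ R ≠ 0 :=
  stmt_18_general θ hθ l m hlm hθlm k hk p R hp hR
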